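/- Assume n ≤ m, v_max < μ, and 0 < ε ≤ 1/5. Let π* be an optimal allocation and let π be an allocation satisfying |V_i(π) − V_i(π*)| ≤ 2ε·v_max for every agent i. Then f(π) ≥ f(π*) − 48ε·v_max. -/

import Mathlib

/-- The valuation of agent `i` under allocation `π`: the sum of utilities of goods assigned to `i`. -/
def V {G A : Type*} [Fintype G] [DecidableEq A] (v : G → ℝ) (π : G → A) (i : A) : ℝ :=
  ∑ j ∈ Finset.univ.filter (fun j => π j = i), v j

/-- Nash social welfare: geometric mean of agents' valuations. -/
noncomputable def NSW {G A : Type*} [Fintype G] [Fintype A] [DecidableEq A]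
    (v : G → ℝ) (π : G → A) : ℝ :=
  (∏ i, V v π i) ^ ((1 : ℝ) / (Fintype.card A))

section Aux

variable {m n : ℕ}

private lemma V_nonneg (v : Fin m → ℝ) (hv : ∀ j, 0 ≤ v j) (π : Fin m → Fin n) (i : Fin n) :
    0 ≤ V v π i := Finset.sum_nonneg fun j _ => hv j

private lemma V_alt (v : Fin m → ℝ) (π : Fin m → Fin n) (i : Fin n) :
    V v π i = ∑ j, if π j = i then v j else 0 := by
  rw [V, Finset.sum_filter]

private lemma sum_V (v : Fin m → ℝ) (π : Fin m → Fin n) :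
    ∑ i, V v π i = ∑ j, v j := by
  simp only [V]
  exact Finset.sum_fiberwise _ _ _

private lemma V_update (v : Fin m → ℝ) (π : Fin m → Fin n) (g : Fin m) (b i : Fin n) :
    V v (Function.update π g b) i
      = V v π i + (if b = i then v g else 0) - (if π g = i then v g else 0) := by
  have h1 : ∀ σ : Fin m → Fin n,
      V v σ i = (if σ g = i then v g else 0)
        + ∑ j ∈ Finset.univ.erase g, (if σ j = i then v j else 0) := by
    intro σ
    rw [V_alt]
    exact (Finset.add_sum_erase _ _ (Finset.mem_univ g)).symm
  rw [h1, h1, Finset.sum_congr rfl (fun j hj => by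
    rw [Function.update_of_ne (Finset.ne_of_mem_erase hj)]), Function.update_self]
  ring

private lemma NSW_prod_le (hn : 0 < n) (v : Fin m → ℝ) (hv : ∀ j, 0 ≤ v j)
    (π π' : Fin m → Fin n) (h : NSW v π' ≤ NSW v π) :
    ∏ i, V v π' i ≤ ∏ i, V v π i := by
  by_contra hc
  push_neg at hc
  have h1 : (∏ i, V v π i) ^ ((1:ℝ)/n) < (∏ i, V v π' i) ^ ((1:ℝ)/n) :=
    Real.rpow_lt_rpow (Finset.prod_nonneg fun i _ => V_nonneg v hv π i) hc
      (div_pos one_pos (by exact_mod_cast hn))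
  rw [NSW, NSW, Fintype.card_fin] at h
  exact absurd h (not_le.mpr h1)

end Aux

/-- Additive error bound: `f(π) ≥ f(π*) - 48 ε v_max`. -/
theorem stmt4 (n m : ℕ) (hn : 0 < n) (hnm : n ≤ m)
    (v : Fin m → ℝ) (hv : ∀ j, 0 < v j)
    (vmax : ℝ) (hvmax : IsGreatest (Set.range v) vmax)
    (hlt : vmax < (∑ j, v j) / n)
    (ε : ℝ)
    (πs : Fin m → Fin n)
    (hopt : ∀ π' : Fin m → Fin n, NSW v π' ≤ NSW v πs)
    (π : Fin m → Fin n)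
    (hclose : ∀ i, |V v π i - V v πs i| ≤ 2 * ε * vmax)
    (hε : 0 < ε) (hε' : ε ≤ 1/5) :
    NSW v π ≥ NSW v πs - 48 * ε * vmax := by
  classical
  set μ := (∑ j, v j) / n with hμdef
  have hn' : (0:ℝ) < n := by exact_mod_cast hn
  have hv0 : ∀ j, 0 ≤ v j := fun j => (hv j).le
  have hvle : ∀ j, v j ≤ vmax := fun j => hvmax.2 ⟨j, rfl⟩
  have hm : 0 < m := lt_of_lt_of_le hn hnm
  have hμpos : 0 < μ :=
    div_pos (Finset.sum_pos (fun j _ => hv j) ⟨⟨0, hm⟩, Finset.mem_univ _⟩) hn'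
  have hvmaxpos : 0 < vmax := lt_of_lt_of_le (hv ⟨0, hm⟩) (hvle _)
  have pow_root : ∀ x : ℝ, 0 ≤ x → ((x ^ n : ℝ)) ^ ((1:ℝ)/n) = x := by
    intro x hx
    rw [← Real.rpow_natCast x n, ← Real.rpow_mul hx, mul_one_div, div_self hn'.ne',
      Real.rpow_one]
  -- positivity of all optimal bundles
  have hVpos : ∀ i, 0 < V v πs i := by
    set π0 : Fin m → Fin n := fun j => ⟨j.val % n, Nat.mod_lt _ hn⟩ with hπ0
    have hV0pos : ∀ i : Fin n, 0 < V v π0 i := by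
      intro i
      have hj : (⟨i.val, lt_of_lt_of_le i.isLt hnm⟩ : Fin m)
          ∈ Finset.univ.filter (fun j => π0 j = i) := by
        simp [hπ0, Fin.ext_iff, Nat.mod_eq_of_lt i.isLt]
      calc (0:ℝ) < v ⟨i.val, lt_of_lt_of_le i.isLt hnm⟩ := hv _
        _ ≤ V v π0 i := Finset.single_le_sum (fun j _ => hv0 j) hj
    have h0 : 0 < NSW v π0 :=
      Real.rpow_pos_of_pos (Finset.prod_pos (fun i _ => hV0pos i)) _
    have h1 : 0 < NSW v πs := lt_of_lt_of_le h0 (hopt π0)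
    have hP : 0 < ∏ i, V v πs i := by
      rcases (Finset.prod_nonneg (fun i _ => V_nonneg v hv0 πs i)).lt_or_eq with h | h
      · exact h
      · exfalso
        rw [NSW, ← h, Real.zero_rpow (one_div_ne_zero (by
          rw [Fintype.card_fin]; exact_mod_cast hn.ne'))] at h1
        exact lt_irrefl _ h1
    intro i
    rcases (V_nonneg v hv0 πs i).lt_or_eq with h | h
    · exact h
    · exfalso
      rw [Finset.prod_eq_zero (Finset.mem_univ i) h.symm] at hP
      exact lt_irrefl _ hP
  -- exchange argument
  have hexch : ∀ g : Fin m, ∀ k : Fin n, k ≠ πs g → V v πs (πs g) - V v πs k ≤ v g := by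
    intro g k hk
    set π' := Function.update πs g k with hπ'
    have hprod : ∏ i, V v π' i ≤ ∏ i, V v πs i := NSW_prod_le hn v hv0 πs π' (hopt π')
    have hVi0 : V v π' (πs g) = V v πs (πs g) - v g := by
      rw [hπ', V_update]; simp [hk]
    have hVk : V v π' k = V v πs k + v g := by
      rw [hπ', V_update]; simp [Ne.symm hk]
    have hVrest : ∀ i ∈ (Finset.univ.erase (πs g)).erase k, V v π' i = V v πs i := by
      intro i hi
      have h1 : i ≠ k := Finset.ne_of_mem_erase hi
      have h2 : i ≠ πs g := Finset.ne_of_mem_erase (Finset.mem_of_mem_erase hi)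
      rw [hπ', V_update]; simp [Ne.symm h1, Ne.symm h2]
    have hdecomp : ∀ W : Fin n → ℝ, ∏ i, W i
        = W (πs g) * (W k * ∏ i ∈ (Finset.univ.erase (πs g)).erase k, W i) := by
      intro W
      rw [Finset.mul_prod_erase _ _ (Finset.mem_erase.mpr ⟨hk, Finset.mem_univ k⟩),
        Finset.mul_prod_erase _ _ (Finset.mem_univ (πs g))]
    have hR : 0 < ∏ i ∈ (Finset.univ.erase (πs g)).erase k, V v πs i :=
      Finset.prod_pos (fun i _ => hVpos i)
    rw [hdecomp (V v π'), hdecomp (V v πs), Finset.prod_congr rfl hVrest, hVi0, hVk] at hprod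
    rw [← mul_assoc, ← mul_assoc] at hprod
    have h2 : (V v πs (πs g) - v g) * (V v πs k + v g) ≤ V v πs (πs g) * V v πs k :=
      le_of_mul_le_mul_right hprod hR
    nlinarith [h2, hv g]
  -- max and min agents
  obtain ⟨i0, -, hi0⟩ := Finset.exists_max_image Finset.univ (V v πs) ⟨⟨0, hn⟩, Finset.mem_univ _⟩
  obtain ⟨k0, -, hk0⟩ := Finset.exists_min_image Finset.univ (V v πs) ⟨⟨0, hn⟩, Finset.mem_univ _⟩
  have hmaxμ : μ ≤ V v πs i0 := by
    have h1 : ∑ j, v j ≤ n * V v πs i0 := by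
      rw [← sum_V v πs]
      calc ∑ i, V v πs i ≤ ∑ _i : Fin n, V v πs i0 :=
            Finset.sum_le_sum (fun i _ => hi0 i (Finset.mem_univ i))
        _ = n * V v πs i0 := by
            rw [Finset.sum_const, Finset.card_univ, Fintype.card_fin, nsmul_eq_mul]
    rw [hμdef, div_le_iff₀ hn']
    linarith
  have hminμ : V v πs k0 ≤ μ := by
    have h1 : n * V v πs k0 ≤ ∑ j, v j := by
      rw [← sum_V v πs]
      calc (n : ℝ) * V v πs k0 = ∑ _i : Fin n, V v πs k0 := by
            rw [Finset.sum_const, Finset.card_univ, Fintype.card_fin, nsmul_eq_mul]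
        _ ≤ ∑ i, V v πs i := Finset.sum_le_sum (fun i _ => hk0 i (Finset.mem_univ i))
    rw [hμdef, le_div_iff₀ hn']
    linarith
  -- a small good in the max bundle
  have hbund : ∃ g ∈ Finset.univ.filter (fun j => πs j = i0), 2 * v g ≤ V v πs i0 := by
    set B := Finset.univ.filter (fun j => πs j = i0) with hB
    by_contra hcon
    push_neg at hcon
    rcases lt_or_ge B.card 2 with hc | hc
    · have h1 : V v πs i0 ≤ B.card • vmax :=
        Finset.sum_le_card_nsmul B v vmax (fun x _ => hvle x)
      have h2 : (B.card : ℝ) ≤ 1 := by exact_mod_cast Nat.lt_succ_iff.mp hc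
      rw [nsmul_eq_mul] at h1
      nlinarith [h1, h2, hvmaxpos, hmaxμ, hlt]
    · obtain ⟨g1, hg1, g2, hg2, hne⟩ := Finset.one_lt_card.mp hc
      have hsub : ({g1, g2} : Finset (Fin m)) ⊆ B := by
        intro x hx
        rcases Finset.mem_insert.mp hx with h | h
        · exact h ▸ hg1
        · exact (Finset.mem_singleton.mp h) ▸ hg2
      have hsum : v g1 + v g2 ≤ V v πs i0 := by
        have h3 : ∑ j ∈ ({g1, g2} : Finset (Fin m)), v j ≤ ∑ j ∈ B, v j :=
          Finset.sum_le_sum_of_subset_of_nonneg hsub (fun j _ _ => hv0 j)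
        rw [Finset.sum_pair hne] at h3
        exact h3
      linarith [hcon g1 hg1, hcon g2 hg2]
  obtain ⟨g0, hg0B, hg0⟩ := hbund
  have hg0i : πs g0 = i0 := by
    simpa using (Finset.mem_filter.mp hg0B).2
  -- key facts
  have hfact1 : V v πs i0 / 2 ≤ V v πs k0 := by
    by_cases hcase : k0 = i0
    · rw [hcase]; linarith [hVpos i0]
    · have h := hexch g0 k0 (by rw [hg0i]; exact hcase)
      rw [hg0i] at h
      linarith
  have hfact2 : V v πs i0 ≤ V v πs k0 + vmax := by
    by_cases hcase : k0 = i0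
    · rw [hcase]; linarith
    · have h := hexch g0 k0 (by rw [hg0i]; exact hcase)
      rw [hg0i] at h
      linarith [hvle g0]
  have hkey : ∀ i, μ / 2 ≤ V v πs i := by
    intro i
    have := hk0 i (Finset.mem_univ i)
    linarith [hfact1, hmaxμ]
  have hVub : ∀ i, V v πs i ≤ 2 * μ := by
    intro i
    have := hi0 i (Finset.mem_univ i)
    linarith [hfact2, hminμ, hlt]
  -- NSW πs ≤ 2μ
  have hNSW0 : 0 ≤ ∏ i, V v πs i := Finset.prod_nonneg fun i _ => V_nonneg v hv0 πs i
  have hNSWle : NSW v πs ≤ 2 * μ := by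
    rw [NSW, Fintype.card_fin]
    have h1 : ∏ i, V v πs i ≤ (2 * μ) ^ n := by
      calc ∏ i, V v πs i ≤ ∏ _i : Fin n, (2 * μ) :=
            Finset.prod_le_prod (fun i _ => V_nonneg v hv0 πs i) (fun i _ => hVub i)
        _ = (2 * μ) ^ n := by
            rw [Finset.prod_const, Finset.card_univ, Fintype.card_fin]
    calc (∏ i, V v πs i) ^ ((1:ℝ)/n) ≤ ((2 * μ) ^ n) ^ ((1:ℝ)/n) :=
          Real.rpow_le_rpow hNSW0 h1 (by positivity)
      _ = 2 * μ := pow_root _ (by linarith)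
  -- the multiplicative loss
  set t := 4 * ε * vmax with ht
  have htpos : 0 < t := by positivity
  have htμ : t / μ < 1 := by
    rw [div_lt_one hμpos]
    nlinarith [hlt, hε, hε', hvmaxpos]
  set r := 1 - t / μ with hr
  have hrpos : 0 < r := by rw [hr]; linarith
  have hrle : ∀ i, r * V v πs i ≤ V v π i := by
    intro i
    have h1 : -(2 * ε * vmax) ≤ V v π i - V v πs i := (abs_le.mp (hclose i)).1
    have h2 : t / 2 ≤ (t / μ) * V v πs i := by
      have h3 := mul_le_mul_of_nonneg_left (hkey i) (div_pos htpos hμpos).le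
      have h4 : (t / μ) * (μ / 2) = t / 2 := by field_simp
      linarith
    have h5 : r * V v πs i = V v πs i - (t / μ) * V v πs i := by rw [hr]; ring
    rw [h5]
    have h6 : t / 2 = 2 * ε * vmax := by rw [ht]; ring
    linarith
  have hQ0 : ∀ i, 0 ≤ r * V v πs i := fun i => mul_nonneg hrpos.le (V_nonneg v hv0 πs i)
  have hprod : r ^ n * ∏ i, V v πs i ≤ ∏ i, V v π i := by
    calc r ^ n * ∏ i, V v πs i = ∏ i : Fin n, (r * V v πs i) := by
          rw [Finset.prod_mul_distrib, Finset.prod_const, Finset.card_univ, Fintype.card_fin]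
      _ ≤ ∏ i, V v π i := Finset.prod_le_prod (fun i _ => hQ0 i) (fun i _ => hrle i)
  have hNSW : r * NSW v πs ≤ NSW v π := by
    simp only [NSW, Fintype.card_fin]
    have h1 : r * (∏ i, V v πs i) ^ ((1:ℝ)/n)
        = (r ^ n * ∏ i, V v πs i) ^ ((1:ℝ)/n) := by
      rw [Real.mul_rpow (pow_nonneg hrpos.le n) hNSW0, pow_root r hrpos.le]
    rw [h1]
    exact Real.rpow_le_rpow (mul_nonneg (pow_nonneg hrpos.le n) hNSW0) hprod (by positivity)
  -- wrap up
  have hNSWnn : 0 ≤ NSW v πs := Real.rpow_nonneg hNSW0 _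
  have h2 : (t / μ) * NSW v πs ≤ (t / μ) * (2 * μ) :=
    mul_le_mul_of_nonneg_left hNSWle (div_pos htpos hμpos).le
  have h3 : (t / μ) * (2 * μ) = 2 * t := by field_simp
  have h4 : r * NSW v πs = NSW v πs - (t / μ) * NSW v πs := by rw [hr]; ring
  have h2' : (t / μ) * NSW v πs ≤ 2 * t := by linarith
  have h7 : t = 4 * ε * vmax := ht
  clear_value r t μ
  linarith [hNSW, h4, h2', h7, mul_pos hε hvmaxpos]
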